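/- For every τ = x + iy in the upper half-plane, with q := e^{2πiτ}, the non-normalized Appell sum A(2τ+1/2, 1/2; 24τ) := −q ∑_{n∈ℤ} (−1)^n q^{12(n²+n)} / (1 + q^{24n+2}) satisfies |A(2τ+1/2, 1/2; 24τ)| ≤ Θ(iy) / (1 − |q|²), where Θ(iy) := ∑_{n∈ℤ} e^{−2πn²y}. -/

import Mathlib

/-!
For `n ≥ 0` the denominator satisfies `|1 + q^(24n+2)| ≥ 1 - |q|²`; for `n < 0` one first
divides numerator and denominator by `q^(24n+2)`, which turns the denominator into
`1 + q^(-24n-2)` with `|q^(-24n-2)| ≤ |q|²`. In both cases the remaining power of `q` has exponent at least `n² - 1`,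
so the `n`-th term is at most `|q|^(n²-1) / (1 - |q|²)`. The prefactor `-q` contributes one more
factor `|q|`, and `|q|^(n²) = e^{-2πn²y}` sums to `Θ(iy)`.
-/

open Real Complex

/-- The non-normalized Appell sum
`A(2τ+1/2, 1/2; 24τ) = -q ∑_{n∈ℤ} (-1)^n q^{12(n²+n)} / (1 + q^{24n+2})`, `q = e^{2πiτ}`. -/
noncomputable def appellA (τ : ℂ) : ℂ :=
  -Complex.exp (2 * (π : ℂ) * Complex.I * τ) *
    ∑' n : ℤ, (-1 : ℂ) ^ n *
      Complex.exp (2 * (π : ℂ) * Complex.I * τ * (12 * ((n : ℂ) ^ 2 + (n : ℂ)))) /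
      (1 + Complex.exp (2 * (π : ℂ) * Complex.I * τ * (24 * (n : ℂ) + 2)))

lemma norm_div_one_add_le {K : Type*} [NormedDivisionRing K] {a w : K} {ρ : ℝ}
    (hw : ‖w‖ ≤ ρ) (hρ : ρ < 1) :
    ‖a / (1 + w)‖ ≤ ‖a‖ / (1 - ρ) := by
  have hden : 1 - ρ ≤ ‖1 + w‖ := by
    have := norm_sub_norm_le (1 : K) (-w)
    rw [norm_one, norm_neg, sub_neg_eq_add] at this
    linarith
  rw [norm_div]
  exact div_le_div_of_nonneg_left (norm_nonneg a) (by linarith) hden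

lemma div_one_add_eq_mul_inv_div_one_add_inv {K : Type*} [Field K] {a w : K} (hw : w ≠ 0) :
    a / (1 + w) = a * w⁻¹ / (1 + w⁻¹) := by
  field_simp
  ring

lemma summable_zpow_sq {r : ℝ} (h0 : 0 < r) (h1 : r < 1) :
    Summable fun n : ℤ => r ^ (n ^ 2) := by
  have hgeom : Summable fun n : ℤ => r ^ |n| := by
    apply Summable.of_nat_of_neg <;>
      simpa [abs_neg, zpow_natCast] using summable_geometric_of_lt_one h0.le h1
  refine hgeom.of_nonneg_of_le (fun n => by positivity) fun n => ?_
  refine zpow_le_zpow_right_of_le_one₀ h0 h1.le ?_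
  rw [← sq_abs]
  nlinarith [abs_nonneg n]

noncomputable def appellTerm (q : ℂ) (n : ℤ) : ℂ :=
  (-1) ^ n * q ^ (12 * (n ^ 2 + n)) / (1 + q ^ (24 * n + 2))

lemma appellA_eq_tsum_appellTerm (τ : ℂ) :
    appellA τ = -Complex.exp (2 * π * I * τ) *
      ∑' n : ℤ, appellTerm (Complex.exp (2 * π * I * τ)) n := by
  have exp_mul_intCast (k : ℤ) :
      Complex.exp (2 * π * I * τ * k) = Complex.exp (2 * π * I * τ) ^ k := by
    rw [mul_comm, exp_int_mul]
  simp only [appellA, appellTerm, ← exp_mul_intCast]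
  push_cast
  rfl

lemma norm_appellTerm_le {q : ℂ} (hq0 : q ≠ 0) (hq1 : ‖q‖ < 1) (n : ℤ) :
    ‖appellTerm q n‖ ≤ ‖q‖ ^ (n ^ 2 - 1) / (1 - ‖q‖ ^ 2) := by
  have hr0 : 0 < ‖q‖ := norm_pos_iff.mpr hq0
  have hq2 : ‖q‖ ^ 2 < 1 := pow_lt_one₀ hr0.le hq1 two_ne_zero
  have norm_zpow_le_sq {k : ℤ} (hk : 2 ≤ k) : ‖q ^ k‖ ≤ ‖q‖ ^ 2 := by
    rw [norm_zpow, ← zpow_natCast]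
    exact zpow_le_zpow_right_of_le_one₀ hr0 hq1.le hk
  have norm_zpow_le {k : ℤ} (hk : n ^ 2 - 1 ≤ k) : ‖q ^ k‖ ≤ ‖q‖ ^ (n ^ 2 - 1) := by
    rw [norm_zpow]
    exact zpow_le_zpow_right_of_le_one₀ hr0 hq1.le hk
  have hden : 0 < 1 - ‖q‖ ^ 2 := by linarith
  rw [appellTerm, mul_div_assoc, norm_mul, norm_zpow, norm_neg, norm_one, one_zpow, one_mul]
  rcases le_or_gt 0 n with hn | hn
  · calc ‖q ^ (12 * (n ^ 2 + n)) / (1 + q ^ (24 * n + 2))‖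
        ≤ ‖q ^ (12 * (n ^ 2 + n))‖ / (1 - ‖q‖ ^ 2) :=
          norm_div_one_add_le (norm_zpow_le_sq (by omega)) hq2
      _ ≤ ‖q‖ ^ (n ^ 2 - 1) / (1 - ‖q‖ ^ 2) := by
          gcongr
          exact norm_zpow_le (by nlinarith)
  · rw [div_one_add_eq_mul_inv_div_one_add_inv (zpow_ne_zero _ hq0), ← zpow_neg,
      ← zpow_add₀ hq0]
    calc ‖q ^ (12 * (n ^ 2 + n) + -(24 * n + 2)) / (1 + q ^ (-(24 * n + 2)))‖
        ≤ ‖q ^ (12 * (n ^ 2 + n) + -(24 * n + 2))‖ / (1 - ‖q‖ ^ 2) :=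
          norm_div_one_add_le (norm_zpow_le_sq (by omega)) hq2
      _ ≤ ‖q‖ ^ (n ^ 2 - 1) / (1 - ‖q‖ ^ 2) := by
          gcongr
          exact norm_zpow_le (by nlinarith)

lemma norm_mul_tsum_appellTerm_le {q : ℂ} (hq0 : q ≠ 0) (hq1 : ‖q‖ < 1) :
    ‖q * ∑' n : ℤ, appellTerm q n‖ ≤ (∑' n : ℤ, ‖q‖ ^ (n ^ 2)) / (1 - ‖q‖ ^ 2) := by
  have hr0 : 0 < ‖q‖ := norm_pos_iff.mpr hq0
  have hbound (n : ℤ) : ‖q * appellTerm q n‖ ≤ ‖q‖ ^ (n ^ 2) / (1 - ‖q‖ ^ 2) := by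
    have hpow : ‖q‖ * ‖q‖ ^ (n ^ 2 - 1) = ‖q‖ ^ (n ^ 2) := by
      rw [zpow_sub_one₀ hr0.ne']
      field_simp
    rw [norm_mul, ← hpow, mul_div_assoc]
    exact mul_le_mul_of_nonneg_left (norm_appellTerm_le hq0 hq1 n) hr0.le
  rw [← tsum_mul_left]
  exact tsum_of_norm_bounded ((summable_zpow_sq hr0 hq1).hasSum.div_const _) hbound

/-- `|A(2τ+1/2,1/2;24τ)| ≤ Θ(iy)/(1-|q|²)` where `Θ(iy) = ∑_{n∈ℤ} e^{-2πn²y}`. -/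
theorem appellA_bound (x y : ℝ) (hy : 0 < y) :
    ‖appellA ((x : ℂ) + (y : ℂ) * Complex.I)‖ ≤
      (∑' n : ℤ, Real.exp (-2 * π * (n : ℝ) ^ 2 * y)) /
        (1 - ‖Complex.exp (2 * (π : ℂ) * Complex.I * ((x : ℂ) + (y : ℂ) * Complex.I))‖ ^ 2) := by
  set q := Complex.exp (2 * π * I * ((x : ℂ) + (y : ℂ) * I))
  have hq : ‖q‖ = Real.exp (-2 * π * y) := by
    rw [Complex.norm_exp]
    congr 1
    simp
  have hq1 : ‖q‖ < 1 := by rw [hq, Real.exp_lt_one_iff]; nlinarith [pi_pos]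
  have hΘ (n : ℤ) : Real.exp (-2 * π * (n : ℝ) ^ 2 * y) = ‖q‖ ^ (n ^ 2) := by
    rw [hq, ← Real.rpow_intCast, ← Real.exp_mul]
    push_cast
    ring_nf
  rw [appellA_eq_tsum_appellTerm, neg_mul, norm_neg]
  simpa only [hΘ] using norm_mul_tsum_appellTerm_le (Complex.exp_ne_zero _) hq1
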